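/- arXiv:2309.16841 — 2 statements merged into one kernel-verified Lean document; each statement's English description precedes it below -/
import Mathlib

section
/- Let l > 0 and c ∈ ℝ, and let F_c denote the ferronematic free energy with coupling constant c. For any C¹ functions Q11, Q12, M1, M2 on [−1,1], the transformed configuration (−Q11(−y), Q12(−y), −M1(−y), M2(−y)) satisfies F_{−c}(−Q11(−·), Q12(−·), −M1(−·), M2(−·)) = F_c(Q11, Q12, M1, M2); that is, the map relating solutions for c and −c preserves the free energy. -/
open Set

/-- The ferronematic free energy on `Ω = [-1, 1]` with elastic constant `l` and
coupling constant `c`. -/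
noncomputable def ferroEnergy (l c : ℝ) (Q11 Q12 M1 M2 : ℝ → ℝ) : ℝ :=
  ∫ y in (-1 : ℝ)..1,
    (l / 2 * ((deriv Q11 y) ^ 2 + (deriv Q12 y) ^ 2)
      + (Q11 y ^ 2 + Q12 y ^ 2 - 1) ^ 2
      + l / 2 * ((deriv M1 y) ^ 2 + (deriv M2 y) ^ 2)
      + 1 / 4 * (M1 y ^ 2 + M2 y ^ 2 - 1) ^ 2
      - c * Q11 y * (M1 y ^ 2 - M2 y ^ 2)
      - 2 * c * Q12 y * M1 y * M2 y)

/-! The reflection `y ↦ -y` preserves `[-1, 1]` and squares away the sign it puts on every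
derivative; flipping the signs of `Q11` and `M1` leaves the bulk terms unchanged and turns
each coupling term into its negative, which the change `c ↦ -c` undoes. -/

theorem deriv_neg_comp_neg (f : ℝ → ℝ) (y : ℝ) :
    deriv (fun z => -f (-z)) y = deriv f (-y) := by
  rw [deriv.fun_neg, deriv_comp_neg, neg_neg]

theorem ferroEnergy_negative_coupling_general (l c : ℝ) (Q11 Q12 M1 M2 : ℝ → ℝ) :
    ferroEnergy l (-c) (fun y => -Q11 (-y)) (fun y => Q12 (-y))
        (fun y => -M1 (-y)) (fun y => M2 (-y))
      = ferroEnergy l c Q11 Q12 M1 M2 := by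
  unfold ferroEnergy
  rw [← neg_neg (1 : ℝ), ← intervalIntegral.integral_comp_neg, neg_neg]
  simp only [deriv_neg_comp_neg, deriv_comp_neg, neg_neg]
  congr 1 with y
  ring

/-- For C¹ configurations, the transformation `(Q11, Q12, M1, M2)(y) ↦
(-Q11(-y), Q12(-y), -M1(-y), M2(-y))` maps the free energy with coupling `c` to the free
energy with coupling `-c` without changing its value. -/
theorem ferroEnergy_negative_coupling (l c : ℝ) (hl : 0 < l) (Q11 Q12 M1 M2 : ℝ → ℝ)
    (hQ11 : ContDiffOn ℝ 1 Q11 (Icc (-1) 1)) (hQ12 : ContDiffOn ℝ 1 Q12 (Icc (-1) 1))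
    (hM1 : ContDiffOn ℝ 1 M1 (Icc (-1) 1)) (hM2 : ContDiffOn ℝ 1 M2 (Icc (-1) 1)) :
    ferroEnergy l (-c) (fun y => -Q11 (-y)) (fun y => Q12 (-y))
        (fun y => -M1 (-y)) (fun y => M2 (-y))
      = ferroEnergy l c Q11 Q12 M1 M2 :=
  ferroEnergy_negative_coupling_general l c Q11 Q12 M1 M2
end

section
/- For every c > 0 there exists a unique ρ* > 1 satisfying the cubic equation 4 ρ*³ − (4 + 2c²) ρ* − c = 0; moreover 1 + 2 c ρ* > 0, so that √(1 + 2cρ*) is well defined and the OR bulk energy density minimisers (Q11, M1) = (ρ*, ±√(1 + 2cρ*)) exist. -/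
/-!
The cubic `p(ρ) = 4ρ³ - (4 + 2c²)ρ - c` satisfies `p(1) = -c(2c + 1) < 0` and `p(c + 2) > 0`, so it has
a root in `(1, c + 2)`. It has no quadratic term, so its three roots sum to zero and their product is
`c / 4 > 0`; two distinct positive roots `r`, `s` would leave `-(r + s) < 0` as the third root and make
that product negative. Hence the root above `1` is unique.
-/

theorem eq_of_depressed_cubic_eq_zero_of_pos {a k c r s : ℝ} (ha : 0 < a) (hc : 0 ≤ c)
    (hr : 0 < r) (hs : 0 < s) (hr₀ : a * r ^ 3 - k * r - c = 0) (hs₀ : a * s ^ 3 - k * s - c = 0) :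
    r = s := by
  by_contra hne
  have hk : a * (r ^ 2 + r * s + s ^ 2) = k := by
    have hprod : (r - s) * (a * (r ^ 2 + r * s + s ^ 2) - k) = 0 := by
      linear_combination hr₀ - hs₀
    linarith [(mul_eq_zero.mp hprod).resolve_left (sub_ne_zero.mpr hne)]
  have hc_eq : c = -(a * r * s * (r + s)) := by
    linear_combination -hr₀ + r * hk
  have : 0 < a * r * s * (r + s) := by positivity
  linarith

theorem exists_orBulk_cubic_root_gt_one {c : ℝ} (hc : 0 < c) :
    ∃ ρ : ℝ, 1 < ρ ∧ 4 * ρ ^ 3 - (4 + 2 * c ^ 2) * ρ - c = 0 := by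
  let p : ℝ → ℝ := fun ρ ↦ 4 * ρ ^ 3 - (4 + 2 * c ^ 2) * ρ - c
  have hp_one : p 1 < 0 := by simp only [p]; nlinarith
  have hp_large : 0 < p (c + 2) := by simp only [p]; nlinarith
  have hivt := intermediate_value_Ioo (by linarith : (1 : ℝ) ≤ c + 2)
    (by fun_prop : Continuous p).continuousOn
  obtain ⟨ρ, hρ, hρ₀⟩ := hivt ⟨hp_one, hp_large⟩
  exact ⟨ρ, hρ.1, hρ₀⟩

/-- For every `c > 0` there is a unique `ρ* > 1` solving the cubic
`4ρ*³ - (4 + 2c²)ρ* - c = 0`; moreover any such root satisfies `1 + 2cρ* > 0`, so the OR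
bulk energy density minimisers `(ρ*, ±√(1 + 2cρ*))` are well defined. -/
theorem orBulk_minimiser_exists_unique (c : ℝ) (hc : 0 < c) :
    (∃! ρ : ℝ, 1 < ρ ∧ 4 * ρ ^ 3 - (4 + 2 * c ^ 2) * ρ - c = 0) ∧
    (∀ ρ : ℝ, 1 < ρ → 4 * ρ ^ 3 - (4 + 2 * c ^ 2) * ρ - c = 0 → 0 < 1 + 2 * c * ρ) := by
  refine ⟨?_, fun ρ hρ _ ↦ by nlinarith⟩
  obtain ⟨ρ, hρ, hρ₀⟩ := exists_orBulk_cubic_root_gt_one hc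
  refine ⟨ρ, ⟨hρ, hρ₀⟩, fun σ ⟨hσ, hσ₀⟩ ↦ ?_⟩
  exact eq_of_depressed_cubic_eq_zero_of_pos (by norm_num) hc.le (by linarith) (by linarith) hσ₀ hρ₀
end
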